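/- Let A be the backward shift on the complex space X. Then for λ ∈ ℂ, λ is an eigenvalue of A if and only if |λ| < 1 or λ = 1; that is, σ_p(A) = {λ : |λ| < 1} ∪ {1}. -/

import Mathlib

open Filter Topology

/-- Membership in the complex space `X` (0-based: `x k` is the paper's
`x_{k+1}`). -/
def MemXC (x : ℕ → ℂ) : Prop :=
  Summable (fun k : ℕ => ‖x (k + 1) / ((k : ℂ) + 2) - x k / ((k : ℂ) + 1)‖) ∧
  Tendsto (fun k : ℕ => x k / ((k : ℂ) + 1)) atTop (𝓝 0)

/-! A nonzero eigenvector of the shift for `l` is a multiple of `(l ^ k)`, so `l` is an eigenvalue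
iff `(l ^ k) ∈ X`. Writing `l ^ (k+1)/(k+2) - l ^ k/(k+1) = l ^ k (l/(k+2) - 1/(k+1))`, the series
is dominated by `2 ‖l‖ ^ k` for `‖l‖ < 1` and telescopes for `l = 1`. If `‖l‖ ≥ 1` and `l ≠ 1`,
the factor `l ^ k` only enlarges the terms, while
`l/(k+2) - 1/(k+1) = (l-1)/(k+2) - 1/((k+1)(k+2))` is not summable in norm, being a harmonic
series plus a summable one. -/

lemma eq_pow_mul_of_succ_eq_mul {M : Type*} [Monoid M] {x : ℕ → M} {l : M}
    (hx : ∀ k, x (k + 1) = l * x k) (k : ℕ) : x k = l ^ k * x 0 := by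
  induction k with
  | zero => rw [pow_zero, one_mul]
  | succ k ih => rw [hx, ih, pow_succ', mul_assoc]

lemma MemXC.const_mul {x : ℕ → ℂ} (hx : MemXC x) (c : ℂ) : MemXC fun k => c * x k := by
  obtain ⟨hsum, hlim⟩ := hx
  refine ⟨?_, by simpa only [mul_div_assoc, mul_zero] using hlim.const_mul c⟩
  simpa only [mul_div_assoc, ← mul_sub, norm_mul] using hsum.mul_left ‖c‖

lemma exists_eigenvector_iff_memXC_pow (l : ℂ) :
    (∃ x : ℕ → ℂ, MemXC x ∧ x ≠ 0 ∧ ∀ k : ℕ, x (k + 1) = l * x k) ↔ MemXC fun k => l ^ k := by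
  constructor
  · rintro ⟨x, hx, hne, hshift⟩
    have hgeom := eq_pow_mul_of_succ_eq_mul hshift
    have hx0 : x 0 ≠ 0 := fun h => hne (funext fun k => by rw [hgeom, h, mul_zero, Pi.zero_apply])
    convert hx.const_mul (x 0)⁻¹ using 2 with k
    rw [hgeom k, mul_left_comm, inv_mul_cancel₀ hx0, mul_one]
  · exact fun h => ⟨_, h, fun h0 => one_ne_zero (congrFun h0 0), fun k => pow_succ' l k⟩

lemma Complex.norm_natCast_add_one (k : ℕ) : ‖(k : ℂ) + 1‖ = k + 1 := by
  exact_mod_cast Complex.norm_natCast (k + 1)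

lemma Complex.norm_natCast_add_two (k : ℕ) : ‖(k : ℂ) + 2‖ = k + 2 := by
  exact_mod_cast Complex.norm_natCast (k + 2)

lemma summable_norm_one_div_add_one_sub_one_div_add_two :
    Summable fun k : ℕ => ‖1 / ((k : ℂ) + 1) - 1 / ((k : ℂ) + 2)‖ := by
  have hsq : Summable fun k : ℕ => 1 / ((k : ℝ) + 1) ^ 2 := by
    exact_mod_cast (summable_nat_add_iff 1).mpr (Real.summable_one_div_nat_pow.mpr one_lt_two)
  refine hsq.of_nonneg_of_le (fun _ => norm_nonneg _) fun k => ?_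
  have hk1 : (k : ℂ) + 1 ≠ 0 := by exact_mod_cast k.succ_ne_zero
  have hk2 : (k : ℂ) + 2 ≠ 0 := by exact_mod_cast (k + 1).succ_ne_zero
  have : 1 / ((k : ℂ) + 1) - 1 / ((k : ℂ) + 2) = 1 / (((k : ℂ) + 1) * ((k : ℂ) + 2)) := by
    field_simp
    ring
  rw [this, norm_div, norm_one, norm_mul, Complex.norm_natCast_add_one,
    Complex.norm_natCast_add_two, sq]
  gcongr
  linarith

lemma not_summable_norm_div_natCast_add_two {c : ℂ} (hc : c ≠ 0) :
    ¬Summable fun k : ℕ => ‖c / ((k : ℂ) + 2)‖ := by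
  simp only [norm_div, Complex.norm_natCast_add_two, div_eq_mul_one_div ‖c‖]
  rw [summable_mul_left_iff (norm_ne_zero_iff.mpr hc)]
  exact_mod_cast mt (summable_nat_add_iff 2).mp Real.not_summable_one_div_natCast

lemma tendsto_pow_div_natCast_add_one {l : ℂ} (hl : ‖l‖ ≤ 1) :
    Tendsto (fun k : ℕ => l ^ k / ((k : ℂ) + 1)) atTop (𝓝 0) := by
  refine squeeze_zero_norm (fun k => ?_) (tendsto_one_div_add_atTop_nhds_zero_nat (𝕜 := ℝ))
  rw [norm_div, norm_pow, Complex.norm_natCast_add_one]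
  gcongr
  exact pow_le_one₀ (norm_nonneg l) hl

lemma pow_succ_div_sub_pow_div (l : ℂ) (k : ℕ) :
    l ^ (k + 1) / ((k : ℂ) + 2) - l ^ k / ((k : ℂ) + 1)
      = l ^ k * (l / ((k : ℂ) + 2) - 1 / ((k : ℂ) + 1)) := by
  ring

lemma memXC_pow_of_norm_lt_one {l : ℂ} (hl : ‖l‖ < 1) : MemXC fun k => l ^ k := by
  refine ⟨?_, tendsto_pow_div_natCast_add_one hl.le⟩
  refine ((summable_geometric_of_lt_one (norm_nonneg l) hl).mul_right 2).of_nonneg_of_le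
    (fun _ => norm_nonneg _) fun k => ?_
  rw [pow_succ_div_sub_pow_div, norm_mul, norm_pow]
  gcongr
  calc ‖l / ((k : ℂ) + 2) - 1 / ((k : ℂ) + 1)‖
      ≤ ‖l‖ / (k + 2) + 1 / (k + 1) := by
        simpa only [norm_div, norm_one, Complex.norm_natCast_add_one,
          Complex.norm_natCast_add_two] using norm_sub_le (l / ((k : ℂ) + 2)) (1 / ((k : ℂ) + 1))
    _ ≤ 2 := by
        have hk := k.cast_nonneg (α := ℝ)
        have h1 : ‖l‖ / (k + 2) ≤ 1 := div_le_one_of_le₀ (by linarith) (by positivity)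
        have h2 : 1 / ((k : ℝ) + 1) ≤ 1 := div_le_one_of_le₀ (by linarith) (by positivity)
        linarith

lemma memXC_one : MemXC fun _ => 1 :=
  ⟨by simpa only [norm_sub_rev] using summable_norm_one_div_add_one_sub_one_div_add_two,
    tendsto_one_div_add_atTop_nhds_zero_nat⟩

lemma not_memXC_pow {l : ℂ} (hl : 1 ≤ ‖l‖) (hl1 : l ≠ 1) : ¬MemXC fun k => l ^ k := by
  rintro ⟨hsum, -⟩
  refine not_summable_norm_div_natCast_add_two (sub_ne_zero.mpr hl1) <|
    (hsum.add summable_norm_one_div_add_one_sub_one_div_add_two).of_nonneg_of_le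
      (fun _ => norm_nonneg _) fun k => ?_
  set t : ℂ := 1 / ((k : ℂ) + 1) - 1 / ((k : ℂ) + 2)
  have hsplit : (l - 1) / ((k : ℂ) + 2) = (l / ((k : ℂ) + 2) - 1 / ((k : ℂ) + 1)) + t := by
    ring
  calc ‖(l - 1) / ((k : ℂ) + 2)‖
      ≤ ‖l / ((k : ℂ) + 2) - 1 / ((k : ℂ) + 1)‖ + ‖t‖ := hsplit ▸ norm_add_le _ _
    _ ≤ ‖l ^ (k + 1) / ((k : ℂ) + 2) - l ^ k / ((k : ℂ) + 1)‖ + ‖t‖ := by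
        rw [pow_succ_div_sub_pow_div, norm_mul, norm_pow]
        gcongr
        exact le_mul_of_one_le_left (norm_nonneg _) (one_le_pow₀ hl)

theorem memXC_pow_iff (l : ℂ) : (MemXC fun k => l ^ k) ↔ ‖l‖ < 1 ∨ l = 1 := by
  refine ⟨fun h => ?_, ?_⟩
  · by_contra! hcon
    exact not_memXC_pow hcon.1 hcon.2 h
  · rintro (hl | rfl)
    · exact memXC_pow_of_norm_lt_one hl
    · simpa only [one_pow] using memXC_one

/-- The point spectrum of the backward shift `A x = (x_{k+1})` on the complex
space `X` is `{λ : |λ| < 1} ∪ {1}`: `λ` is an eigenvalue of `A` iff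
`|λ| < 1` or `λ = 1`. -/
theorem stmt_16 (l : ℂ) :
    (∃ x : ℕ → ℂ, MemXC x ∧ x ≠ 0 ∧ ∀ k : ℕ, x (k + 1) = l * x k) ↔
      (‖l‖ < 1 ∨ l = 1) :=
  (exists_eigenvector_iff_memXC_pow l).trans (memXC_pow_iff l)
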